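/- Let 𝒫 be any of the properties SBrSNNI, P_BrNDC, SBrNDC. If P ∈ 𝒫, then P∖L ∈ 𝒫 for every L ⊆ A (compositionality with respect to restriction). -/

import Mathlib

namespace SecurityNI

/-- Process terms: `0`, action prefix (`none` = τ, `some a` = observable action),
choice, CSP-style parallel composition with synchronization set, restriction,
hiding, and constants (whose defining equations are given by an environment). -/
inductive Proc (A : Type) (C : Type) : Type where
  | nil : Proc A C
  | pre : Option A → Proc A C → Proc A C
  | choice : Proc A C → Proc A C → Proc A C
  | par : Set A → Proc A C → Proc A C → Proc A C
  | restrict : Proc A C → Set A → Proc A C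
  | hide : Proc A C → Set A → Proc A C
  | const : C → Proc A C

variable {A C : Type}

/-- A process term is guarded when every constant occurrence is in the scope
of an action prefix operator. -/
def Guarded : Proc A C → Prop
  | .nil => True
  | .pre _ _ => True
  | .choice p q => Guarded p ∧ Guarded q
  | .par _ p q => Guarded p ∧ Guarded q
  | .restrict p _ => Guarded p
  | .hide p _ => Guarded p
  | .const _ => False

/-- Operational semantics, parameterized by the defining equations `env` of
the constants.  Labels are `Option A`, with `none` playing the role of τ. -/
inductive Trans (env : C → Proc A C) : Proc A C → Option A → Proc A C → Prop where
  | pre (a : Option A) (p : Proc A C) : Trans env (.pre a p) a p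
  | choiceL {p q a p'} (h : Trans env p a p') : Trans env (.choice p q) a p'
  | choiceR {p q a q'} (h : Trans env q a q') : Trans env (.choice p q) a q'
  | parL {L p q a p'} (h : Trans env p a p') (hn : ∀ x, a = some x → x ∉ L) :
      Trans env (.par L p q) a (.par L p' q)
  | parR {L p q a q'} (h : Trans env q a q') (hn : ∀ x, a = some x → x ∉ L) :
      Trans env (.par L p q) a (.par L p q')
  | sync {L p q x p' q'} (h1 : Trans env p (some x) p') (h2 : Trans env q (some x) q')
      (hx : x ∈ L) : Trans env (.par L p q) (some x) (.par L p' q')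
  | res {p a p' L} (h : Trans env p a p') (hn : ∀ x, a = some x → x ∉ L) :
      Trans env (.restrict p L) a (.restrict p' L)
  | hideIn {p x p' L} (h : Trans env p (some x) p') (hx : x ∈ L) :
      Trans env (.hide p L) none (.hide p' L)
  | hideOut {p a p' L} (h : Trans env p a p') (hn : ∀ x, a = some x → x ∉ L) :
      Trans env (.hide p L) a (.hide p' L)
  | const {c a p'} (h : Trans env (env c) a p') : Trans env (.const c) a p'

section LTS

variable {S : Type} (tr : S → Option A → S → Prop)

/-- Finitely many (possibly zero) τ-transitions. -/
def TauStar : S → S → Prop :=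
  Relation.ReflTransGen (fun s s' => tr s none s')

/-- `B` is a branching bisimulation. -/
def IsBranchingBisim (B : S → S → Prop) : Prop :=
  Symmetric B ∧
    ∀ s1 s2, B s1 s2 → ∀ a s1', tr s1 a s1' →
      (a = none ∧ B s1' s2) ∨
      (∃ s2b s2', TauStar tr s2 s2b ∧ tr s2b a s2' ∧ B s1 s2b ∧ B s1' s2')

/-- Branching bisimilarity `≈_b`. -/
def BrBisim (s1 s2 : S) : Prop :=
  ∃ B, IsBranchingBisim tr B ∧ B s1 s2

/-- `B` is a weak bisimulation. -/
def IsWeakBisim (B : S → S → Prop) : Prop :=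
  Symmetric B ∧
    ∀ s1 s2, B s1 s2 →
      (∀ s1', tr s1 none s1' → ∃ s2', TauStar tr s2 s2' ∧ B s1' s2') ∧
      (∀ x s1', tr s1 (some x) s1' →
        ∃ t t' s2', TauStar tr s2 t ∧ tr t (some x) t' ∧ TauStar tr t' s2' ∧ B s1' s2')

/-- Weak bisimilarity `≈`. -/
def WeakBisim (s1 s2 : S) : Prop :=
  ∃ B, IsWeakBisim tr B ∧ B s1 s2

/-- Reachability via finitely many transitions. -/
def Reach : S → S → Prop :=
  Relation.ReflTransGen (fun s s' => ∃ a, tr s a s')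

end LTS

section Security

variable (env : C → Proc A C) (AH : Set A)

/-- `P ∈ BrSNNI` iff `P∖A_H ≈_b P/A_H`. -/
def BrSNNI (p : Proc A C) : Prop :=
  BrBisim (Trans env) (.restrict p AH) (.hide p AH)

/-- All processes reachable from `q` perform only actions in `AH`. -/
def HighOnly (q : Proc A C) : Prop :=
  ∀ q', Reach (Trans env) q q' → ∀ a q'', Trans env q' a q'' → ∃ h ∈ AH, a = some h

/-- `P ∈ BrNDC` iff `P∖A_H ≈_b ((P ∥_L Q)/L)∖A_H` for every high-level `Q`
and every `L ⊆ A_H`. -/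
def BrNDC (p : Proc A C) : Prop :=
  ∀ q, HighOnly env AH q → ∀ L, L ⊆ AH →
    BrBisim (Trans env) (.restrict p AH) (.restrict (.hide (.par L p q) L) AH)

/-- `P ∈ SBrSNNI` iff every reachable process is BrSNNI. -/
def SBrSNNI (p : Proc A C) : Prop :=
  ∀ p', Reach (Trans env) p p' → BrSNNI env AH p'

/-- `P ∈ P_BrNDC` iff every reachable process is BrNDC. -/
def PBrNDC (p : Proc A C) : Prop :=
  ∀ p', Reach (Trans env) p p' → BrNDC env AH p'

/-- `P ∈ SBrNDC` iff for every reachable `P'` and every high transition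
`P' --h→ P''`, `P'∖A_H ≈_b P''∖A_H`. -/
def SBrNDC (p : Proc A C) : Prop :=
  ∀ p' p'', Reach (Trans env) p p' → ∀ h ∈ AH, Trans env p' (some h) p'' →
    BrBisim (Trans env) (.restrict p' AH) (.restrict p'' AH)

/-- `P ∈ BSNNI` iff `P∖A_H ≈ P/A_H`. -/
def BSNNI (p : Proc A C) : Prop :=
  WeakBisim (Trans env) (.restrict p AH) (.hide p AH)

/-- `P ∈ BNDC` iff `P∖A_H ≈ ((P ∥_L Q)/L)∖A_H` for every high-level `Q`
and every `L ⊆ A_H`. -/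
def BNDC (p : Proc A C) : Prop :=
  ∀ q, HighOnly env AH q → ∀ L, L ⊆ AH →
    WeakBisim (Trans env) (.restrict p AH) (.restrict (.hide (.par L p q) L) AH)

/-- `P ∈ SBSNNI` iff every reachable process is BSNNI. -/
def SBSNNI (p : Proc A C) : Prop :=
  ∀ p', Reach (Trans env) p p' → BSNNI env AH p'

/-- `P ∈ P_BNDC` iff every reachable process is BNDC. -/
def PBNDC (p : Proc A C) : Prop :=
  ∀ p', Reach (Trans env) p p' → BNDC env AH p'

/-- `P ∈ SBNDC` iff for every reachable `P'` and every high transition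
`P' --h→ P''`, `P'∖A_H ≈ P''∖A_H`. -/
def SBNDC (p : Proc A C) : Prop :=
  ∀ p' p'', Reach (Trans env) p p' → ∀ h ∈ AH, Trans env p' (some h) p'' →
    WeakBisim (Trans env) (.restrict p' AH) (.restrict p'' AH)

/-- No high-level actions occur in `p`: no process reachable from `p`
can perform a high-level action. -/
def NoHigh (p : Proc A C) : Prop :=
  ∀ p', Reach (Trans env) p p' → ∀ h ∈ AH, ∀ p'', ¬ Trans env p' (some h) p''

end Security

/-! ### Auxiliary theory: branching bisimilarity is an equivalence with stuttering -/

section BBTheory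

variable {A S : Type} {tr : S → Option A → S → Prop}

theorem isBB_eq : IsBranchingBisim tr (· = ·) :=
  ⟨fun _ _ h => h.symm, fun s1 s2 h a s1' hstep =>
    Or.inr ⟨s2, s1', Relation.ReflTransGen.refl, h ▸ hstep, h, rfl⟩⟩

theorem br_refl (s : S) : BrBisim tr s s := ⟨_, isBB_eq, rfl⟩

theorem br_symm {s t : S} (h : BrBisim tr s t) : BrBisim tr t s :=
  let ⟨B, hB, hst⟩ := h; ⟨B, hB, hB.1 hst⟩

/-- Semi-branching bisimulations (Basten). -/
def SemiBB (tr : S → Option A → S → Prop) (B : S → S → Prop) : Prop :=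
  Symmetric B ∧ ∀ s t, B s t → ∀ a s', tr s a s' →
    ∃ tb, TauStar tr t tb ∧
      ((a = none ∧ B s tb ∧ B s' tb) ∨ ∃ t', tr tb a t' ∧ B s tb ∧ B s' t')

theorem SemiBB.ofBB {B : S → S → Prop} (h : IsBranchingBisim tr B) : SemiBB tr B := by
  obtain ⟨hsym, hcond⟩ := h
  refine ⟨hsym, fun s t hB a s' hstep => ?_⟩
  rcases hcond s t hB a s' hstep with ⟨rfl, h1⟩ | ⟨tb, t', h1, h2, h3, h4⟩
  · exact ⟨t, Relation.ReflTransGen.refl, Or.inl ⟨rfl, hB, h1⟩⟩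
  · exact ⟨tb, h1, Or.inr ⟨t', h2, h3, h4⟩⟩

/-- Semi-branching bisimilarity. -/
def SB (tr : S → Option A → S → Prop) (s t : S) : Prop := ∃ B, SemiBB tr B ∧ B s t

theorem sb_symm {s t : S} (h : SB tr s t) : SB tr t s :=
  let ⟨B, hB, hst⟩ := h; ⟨B, hB, hB.1 hst⟩

theorem isSemi_SB : SemiBB tr (SB tr) := by
  refine ⟨fun x y => sb_symm, fun s t hB a s' hstep => ?_⟩
  obtain ⟨B, hB, hst⟩ := hB
  obtain ⟨tb, h1, h2⟩ := hB.2 s t hst a s' hstep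
  refine ⟨tb, h1, ?_⟩
  rcases h2 with ⟨rfl, g1, g2⟩ | ⟨t', g0, g1, g2⟩
  · exact Or.inl ⟨rfl, ⟨B, hB, g1⟩, ⟨B, hB, g2⟩⟩
  · exact Or.inr ⟨t', g0, ⟨B, hB, g1⟩, ⟨B, hB, g2⟩⟩

theorem semi_tau_response {B : S → S → Prop} (hB : SemiBB tr B) {s t s' : S}
    (hst : B s t) (h : TauStar tr s s') : ∃ t', TauStar tr t t' ∧ B s' t' := by
  induction h with
  | refl => exact ⟨t, Relation.ReflTransGen.refl, hst⟩
  | tail hrest hstep ih =>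
    obtain ⟨t1, ht1, hB1⟩ := ih
    obtain ⟨tb, htb, hcase⟩ := hB.2 _ _ hB1 none _ hstep
    rcases hcase with ⟨_, _, h2⟩ | ⟨t', ht', _, h2⟩
    · exact ⟨tb, ht1.trans htb, h2⟩
    · exact ⟨t', (ht1.trans htb).tail ht', h2⟩

theorem isSemi_comp : SemiBB tr (fun s u => ∃ t, SB tr s t ∧ SB tr t u) := by
  constructor
  · rintro x y ⟨t, h1, h2⟩; exact ⟨t, sb_symm h2, sb_symm h1⟩
  · rintro s u ⟨t, hst, htu⟩ a s' hstep
    obtain ⟨tb, htb, hcase⟩ := isSemi_SB.2 _ _ hst a s' hstep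
    obtain ⟨ub, hub, hub'⟩ := semi_tau_response isSemi_SB htu htb
    rcases hcase with ⟨rfl, h1, h2⟩ | ⟨t', ht', h1, h2⟩
    · exact ⟨ub, hub, Or.inl ⟨rfl, ⟨tb, h1, hub'⟩, ⟨tb, h2, hub'⟩⟩⟩
    · obtain ⟨ub2, hub2, hcase2⟩ := isSemi_SB.2 _ _ hub' a t' ht'
      rcases hcase2 with ⟨rfl, g1, g2⟩ | ⟨u', hu', g1, g2⟩
      · exact ⟨ub2, hub.trans hub2, Or.inl ⟨rfl, ⟨tb, h1, g1⟩, ⟨t', h2, g2⟩⟩⟩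
      · exact ⟨ub2, hub.trans hub2, Or.inr ⟨u', hu', ⟨tb, h1, g1⟩, ⟨t', h2, g2⟩⟩⟩

theorem sb_trans {s t u : S} (h1 : SB tr s t) (h2 : SB tr t u) : SB tr s u :=
  ⟨_, isSemi_comp, ⟨t, h1, h2⟩⟩

theorem sb_of_br {s t : S} (h : BrBisim tr s t) : SB tr s t :=
  let ⟨B, hB, hst⟩ := h; ⟨B, SemiBB.ofBB hB, hst⟩

/-- The stuttering property for semi-branching bisimilarity. -/
theorem sb_mid {s t u t' : S} (hst : SB tr s t) (hst' : SB tr s t')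
    (h1 : TauStar tr t u) (h2 : TauStar tr u t') : SB tr s u := by
  refine ⟨fun x y => SB tr x y ∨ (x = s ∧ y = u) ∨ (x = u ∧ y = s), ⟨?_, ?_⟩,
    Or.inr (Or.inl ⟨rfl, rfl⟩)⟩
  · rintro x y (h | ⟨rfl, rfl⟩ | ⟨rfl, rfl⟩)
    · exact Or.inl (sb_symm h)
    · exact Or.inr (Or.inr ⟨rfl, rfl⟩)
    · exact Or.inr (Or.inl ⟨rfl, rfl⟩)
  · rintro x y (hxy | ⟨rfl, rfl⟩ | ⟨rfl, rfl⟩) a x' hstep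
    · obtain ⟨tb, htb, hcase⟩ := isSemi_SB.2 _ _ hxy a x' hstep
      refine ⟨tb, htb, ?_⟩
      rcases hcase with ⟨rfl, g1, g2⟩ | ⟨t'', g0, g1, g2⟩
      · exact Or.inl ⟨rfl, Or.inl g1, Or.inl g2⟩
      · exact Or.inr ⟨t'', g0, Or.inl g1, Or.inl g2⟩
    · -- x = s, y = u : respond from u using t'
      obtain ⟨tb, htb, hcase⟩ := isSemi_SB.2 _ _ hst' a x' hstep
      refine ⟨tb, h2.trans htb, ?_⟩
      rcases hcase with ⟨rfl, g1, g2⟩ | ⟨t'', g0, g1, g2⟩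
      · exact Or.inl ⟨rfl, Or.inl g1, Or.inl g2⟩
      · exact Or.inr ⟨t'', g0, Or.inl g1, Or.inl g2⟩
    · -- x = u, y = s
      obtain ⟨s1, hs1, hus1⟩ := semi_tau_response isSemi_SB (sb_symm hst) h1
      obtain ⟨sb, hsb, hcase⟩ := isSemi_SB.2 _ _ hus1 a x' hstep
      refine ⟨sb, hs1.trans hsb, ?_⟩
      rcases hcase with ⟨rfl, g1, g2⟩ | ⟨s'', g0, g1, g2⟩
      · exact Or.inl ⟨rfl, Or.inl g1, Or.inl g2⟩
      · exact Or.inr ⟨s'', g0, Or.inl g1, Or.inl g2⟩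

theorem isBB_SB : IsBranchingBisim tr (SB tr) := by
  refine ⟨fun x y => sb_symm, fun s1 s2 h a s1' hstep => ?_⟩
  obtain ⟨tb, htb, hcase⟩ := isSemi_SB.2 _ _ h a s1' hstep
  rcases hcase with ⟨rfl, h1, h2⟩ | ⟨t', ht', h1, h2⟩
  · rcases htb.cases_tail with rfl | ⟨c, hc, hcstep⟩
    · exact Or.inl ⟨rfl, h2⟩
    · exact Or.inr ⟨c, tb, hc, hcstep,
        sb_mid h h1 hc (Relation.ReflTransGen.single hcstep), h2⟩
  · exact Or.inr ⟨tb, t', htb, ht', h1, h2⟩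

theorem br_of_sb {s t : S} (h : SB tr s t) : BrBisim tr s t := ⟨SB tr, isBB_SB, h⟩

theorem br_trans {s t u : S} (h1 : BrBisim tr s t) (h2 : BrBisim tr t u) : BrBisim tr s u :=
  br_of_sb (sb_trans (sb_of_br h1) (sb_of_br h2))

theorem isBB_Br : IsBranchingBisim tr (BrBisim tr) := by
  have he : BrBisim tr = SB tr :=
    funext fun s => funext fun t => propext ⟨sb_of_br, br_of_sb⟩
  rw [he]; exact isBB_SB

theorem br_mid {s t u t' : S} (hst : BrBisim tr s t) (hst' : BrBisim tr s t')
    (h1 : TauStar tr t u) (h2 : TauStar tr u t') : BrBisim tr s u :=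
  br_of_sb (sb_mid (sb_of_br hst) (sb_of_br hst') h1 h2)

/-- Strong bisimulations give branching bisimilarity. -/
def IsStrongBB (tr : S → Option A → S → Prop) (B : S → S → Prop) : Prop :=
  Symmetric B ∧ ∀ s t, B s t → ∀ a s', tr s a s' → ∃ t', tr t a t' ∧ B s' t'

theorem IsStrongBB.toBB {B : S → S → Prop} (h : IsStrongBB tr B) : IsBranchingBisim tr B :=
  ⟨h.1, fun s1 s2 hB a s1' hstep =>
    let ⟨t', ht, hB'⟩ := h.2 s1 s2 hB a s1' hstep
    Or.inr ⟨s2, t', Relation.ReflTransGen.refl, ht, hB, hB'⟩⟩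

/-- Build branching bisimilarity from a two-sided simulation. -/
theorem br_of_sim2 {B : S → S → Prop} {s t : S}
    (h1 : ∀ s t, B s t → ∀ a s', tr s a s' → ∃ t', tr t a t' ∧ B s' t')
    (h2 : ∀ s t, B s t → ∀ a t', tr t a t' → ∃ s', tr s a s' ∧ B s' t')
    (hst : B s t) : BrBisim tr s t := by
  refine ⟨fun x y => B x y ∨ B y x, IsStrongBB.toBB ⟨?_, ?_⟩, Or.inl hst⟩
  · rintro x y (h | h); exacts [Or.inr h, Or.inl h]
  · rintro x y (hB | hB) a x' hstep
    · obtain ⟨t', ht, hB'⟩ := h1 _ _ hB a x' hstep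
      exact ⟨t', ht, Or.inl hB'⟩
    · obtain ⟨t', ht, hB'⟩ := h2 _ _ hB a x' hstep
      exact ⟨t', ht, Or.inr hB'⟩

end BBTheory
section ProcTheory

variable {A C : Type} {env : C → Proc A C} {AH : Set A}

/-! #### Transition inversion lemmas -/

theorem trans_res_inv {q : Proc A C} {L : Set A} {a z}
    (h : Trans env (.restrict q L) a z) :
    ∃ q', z = .restrict q' L ∧ Trans env q a q' ∧ ∀ x, a = some x → x ∉ L := by
  cases h with
  | res h hn => exact ⟨_, rfl, h, hn⟩

theorem trans_hide_inv {q : Proc A C} {L : Set A} {a z}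
    (h : Trans env (.hide q L) a z) :
    ∃ c q', z = .hide q' L ∧ Trans env q c q' ∧
      ((a = none ∧ ∃ h0, c = some h0 ∧ h0 ∈ L) ∨ (a = c ∧ ∀ x, c = some x → x ∉ L)) := by
  cases h with
  | hideIn h hx => exact ⟨_, _, rfl, h, Or.inl ⟨rfl, _, rfl, hx⟩⟩
  | hideOut h hn => exact ⟨_, _, rfl, h, Or.inr ⟨rfl, hn⟩⟩

theorem trans_rr_inv {q : Proc A C} {L1 L2 : Set A} {a z}
    (h : Trans env (.restrict (.restrict q L1) L2) a z) :
    ∃ q', z = .restrict (.restrict q' L1) L2 ∧ Trans env q a q' ∧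
      ∀ x, a = some x → x ∉ L1 ∪ L2 := by
  obtain ⟨q1, rfl, h1, hn2⟩ := trans_res_inv h
  obtain ⟨q', rfl, h2, hn1⟩ := trans_res_inv h1
  exact ⟨q', rfl, h2, fun x hx => by
    simp only [Set.mem_union]; exact fun hc => hc.elim (hn1 x hx) (hn2 x hx)⟩

theorem trans_rr_mk {q q' : Proc A C} {L1 L2 : Set A} {a}
    (h : Trans env q a q') (hn : ∀ x, a = some x → x ∉ L1 ∪ L2) :
    Trans env (.restrict (.restrict q L1) L2) a (.restrict (.restrict q' L1) L2) :=
  Trans.res (Trans.res h (fun x hx hc => hn x hx (Or.inl hc)))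
    (fun x hx hc => hn x hx (Or.inr hc))

/-! #### Reachability -/

theorem reach_res_inv {q : Proc A C} {L : Set A} {z}
    (h : Reach (Trans env) (.restrict q L) z) :
    ∃ q', z = .restrict q' L ∧ Reach (Trans env) q q' := by
  induction h with
  | refl => exact ⟨q, rfl, Relation.ReflTransGen.refl⟩
  | tail hrest hstep ih =>
    obtain ⟨q', rfl, hr⟩ := ih
    obtain ⟨a, ht⟩ := hstep
    obtain ⟨q'', rfl, ht', _⟩ := trans_res_inv ht
    exact ⟨q'', rfl, hr.tail ⟨a, ht'⟩⟩

theorem sbrsnni_hered {q q' : Proc A C} (h : SBrSNNI env AH q)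
    (hr : Reach (Trans env) q q') : SBrSNNI env AH q' :=
  fun p' hr' => h p' (hr.trans hr')

theorem sbrsnni_self {q : Proc A C} (h : SBrSNNI env AH q) :
    BrBisim (Trans env) (.restrict q AH) (.hide q AH) := h q Relation.ReflTransGen.refl

theorem highOnly_trans {r r' : Proc A C} {b} (h : HighOnly env AH r)
    (ht : Trans env r b r') : HighOnly env AH r' :=
  fun q' hr' => h q' ((Relation.ReflTransGen.single ⟨b, ht⟩).trans hr')

theorem highOnly_now {r r' : Proc A C} {b} (h : HighOnly env AH r)
    (ht : Trans env r b r') : ∃ h0 ∈ AH, b = some h0 :=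
  h r Relation.ReflTransGen.refl b r' ht

theorem highOnly_res {r : Proc A C} {M : Set A} (h : HighOnly env AH r) :
    HighOnly env AH (.restrict r M) := by
  intro q' hre a q'' ht
  obtain ⟨r', rfl, hr⟩ := reach_res_inv hre
  obtain ⟨r'', rfl, ht', _⟩ := trans_res_inv ht
  exact h r' hr a r'' ht'

/-! #### Hidden/low internal paths -/

/-- Steps of `q` that become `τ` when `A_H` is hidden, and avoid `M` (for observable actions). -/
def HS (env : C → Proc A C) (AH M : Set A) (x y : Proc A C) : Prop :=
  ∃ a, Trans env x a y ∧ (a = none ∨ ∃ h, a = some h ∧ h ∈ AH ∧ h ∉ M)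

def HP (env : C → Proc A C) (AH M : Set A) : Proc A C → Proc A C → Prop :=
  Relation.ReflTransGen (HS env AH M)

/-- Pure τ paths. -/
def TP (env : C → Proc A C) : Proc A C → Proc A C → Prop :=
  Relation.ReflTransGen (fun x y => Trans env x none y)

theorem tp_hp {M : Set A} {q q' : Proc A C} (h : TP env q q') : HP env AH M q q' :=
  Relation.ReflTransGen.mono (p := HS env AH M) (fun x y ht => ⟨none, ht, Or.inl rfl⟩) _ _ h

theorem hp_mono {M M' : Set A} (hMM : M' ⊆ M) {q q' : Proc A C} (h : HP env AH M q q') :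
    HP env AH M' q q' :=
  Relation.ReflTransGen.mono (p := HS env AH M')
    (fun x y ⟨a, ht, hc⟩ => ⟨a, ht, hc.imp id (fun ⟨h0, he, h1, h2⟩ =>
      ⟨h0, he, h1, fun hc' => h2 (hMM hc')⟩)⟩) _ _ h

theorem reach_of_hp {M : Set A} {q q' : Proc A C} (h : HP env AH M q q') :
    Reach (Trans env) q q' :=
  Relation.ReflTransGen.mono (p := fun s s' => ∃ a, Trans env s a s') (fun x y ⟨a, ht, _⟩ => ⟨a, ht⟩) _ _ h

theorem reach_of_tp {q q' : Proc A C} (h : TP env q q') : Reach (Trans env) q q' :=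
  Relation.ReflTransGen.mono (p := fun s s' => ∃ a, Trans env s a s') (fun x y ht => ⟨none, ht⟩) _ _ h

theorem hs_step_hide {M : Set A} {x y : Proc A C} (h : HS env AH M x y) :
    Trans env (.hide x AH) none (.hide y AH) := by
  obtain ⟨a, ht, hc⟩ := h
  rcases hc with rfl | ⟨h0, rfl, h1, _⟩
  · exact Trans.hideOut ht (fun x hx => nomatch hx)
  · exact Trans.hideIn ht h1

theorem hp_lift_hide {M : Set A} {q q' : Proc A C} (h : HP env AH M q q') :
    TauStar (Trans env) (.hide q AH) (.hide q' AH) := by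
  induction h with
  | refl => exact Relation.ReflTransGen.refl
  | tail _ hstep ih => exact ih.tail (hs_step_hide hstep)

theorem hs_step_resM {M : Set A} {x y : Proc A C} (h : HS env AH M x y) :
    Trans env (.hide (.restrict x M) AH) none (.hide (.restrict y M) AH) := by
  obtain ⟨a, ht, hc⟩ := h
  rcases hc with rfl | ⟨h0, rfl, h1, h2⟩
  · exact Trans.hideOut (Trans.res ht (fun x hx => nomatch hx)) (fun x hx => nomatch hx)
  · exact Trans.hideIn (Trans.res ht (fun x hx => by
      injection hx with hx; subst hx; exact h2)) h1

theorem hp_lift_resM {M : Set A} {q q' : Proc A C} (h : HP env AH M q q') :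
    TauStar (Trans env) (.hide (.restrict q M) AH) (.hide (.restrict q' M) AH) := by
  induction h with
  | refl => exact Relation.ReflTransGen.refl
  | tail _ hstep ih => exact ih.tail (hs_step_resM hstep)

theorem tau_lift_res {L : Set A} {q q' : Proc A C} (h : TauStar (Trans env) q q') :
    TauStar (Trans env) (.restrict q L) (.restrict q' L) :=
  Relation.ReflTransGen.lift (p := fun s s' => Trans env s none s') (fun x => Proc.restrict x L)
    (fun _ _ ht => Trans.res ht (fun x hx => nomatch hx)) _ _ h

/-! #### τ-path decompositions -/

theorem taustar_hide_inv {q : Proc A C} {z}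
    (h : TauStar (Trans env) (.hide q AH) z) :
    ∃ q', z = .hide q' AH ∧ HP env AH ∅ q q' := by
  induction h with
  | refl => exact ⟨q, rfl, Relation.ReflTransGen.refl⟩
  | tail _ hstep ih =>
    obtain ⟨q1, rfl, hp⟩ := ih
    cases hstep with
    | hideIn ht hx =>
      exact ⟨_, rfl, hp.tail ⟨_, ht, Or.inr ⟨_, rfl, hx, Set.notMem_empty _⟩⟩⟩
    | hideOut ht hn => exact ⟨_, rfl, hp.tail ⟨_, ht, Or.inl rfl⟩⟩

theorem taustar_res_inv {q : Proc A C} {L : Set A} {z}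
    (h : TauStar (Trans env) (.restrict q L) z) :
    ∃ q', z = .restrict q' L ∧ TP env q q' := by
  induction h with
  | refl => exact ⟨q, rfl, Relation.ReflTransGen.refl⟩
  | tail _ hstep ih =>
    obtain ⟨q1, rfl, hp⟩ := ih
    cases hstep with
    | res ht hn => exact ⟨_, rfl, hp.tail ht⟩

/-- Split a hidden path at the first step using a high action in `M`. -/
theorem hp_split {M : Set A} {q q' : Proc A C} (h : HP env AH ∅ q q') :
    HP env AH M q q' ∨
    ∃ t t' h0, HP env AH M q t ∧ h0 ∈ AH ∧ h0 ∈ M ∧ Trans env t (some h0) t' ∧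
      HP env AH ∅ t' q' := by
  induction h using Relation.ReflTransGen.head_induction_on with
  | refl => exact Or.inl Relation.ReflTransGen.refl
  | head hstep hrest ih =>
    obtain ⟨b, ht, hb⟩ := hstep
    have good : (b = none ∨ ∃ h0, b = some h0 ∧ h0 ∈ AH ∧ h0 ∉ M) ∨
        ∃ h0, b = some h0 ∧ h0 ∈ AH ∧ h0 ∈ M := by
      rcases hb with rfl | ⟨h0, rfl, h1, _⟩
      · exact Or.inl (Or.inl rfl)
      · by_cases hm : h0 ∈ M
        · exact Or.inr ⟨h0, rfl, h1, hm⟩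
        · exact Or.inl (Or.inr ⟨h0, rfl, h1, hm⟩)
    rcases good with hg | ⟨h0, rfl, h1, h2⟩
    · rcases ih with hcl | ⟨t, t', h0, hpre, g1, g2, g3, g4⟩
      · exact Or.inl (hcl.head ⟨b, ht, hg⟩)
      · exact Or.inr ⟨t, t', h0, hpre.head ⟨b, ht, hg⟩, g1, g2, g3, g4⟩
    · exact Or.inr ⟨_, _, h0, Relation.ReflTransGen.refl, h1, h2, ht, hrest⟩

end ProcTheory
section CoreLemma

variable {A C : Type} {env : C → Proc A C} {AH : Set A}

/-- Invariant used in the core relation. -/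
def Inv2 (env : C → Proc A C) (AH : Set A) (X r : Proc A C) : Prop :=
  BrBisim (Trans env) X (.hide r AH) ∨ BrBisim (Trans env) X (.restrict r AH)

theorem keyRes {r X Z : Proc A C} {a}
    (hX : BrBisim (Trans env) X (.restrict r AH)) (hstep : Trans env X a Z) :
    (a = none ∧ BrBisim (Trans env) Z (.restrict r AH)) ∨
    ∃ sb s', TP env r sb ∧ Trans env sb a s' ∧ (∀ x, a = some x → x ∉ AH) ∧
      BrBisim (Trans env) X (.restrict sb AH) ∧ BrBisim (Trans env) Z (.restrict s' AH) := by
  rcases isBB_Br.2 X _ hX a Z hstep with ⟨rfl, h1⟩ | ⟨wb, w', htau, hw, h1, h2⟩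
  · exact Or.inl ⟨rfl, h1⟩
  · obtain ⟨sb, rfl, hpath⟩ := taustar_res_inv htau
    obtain ⟨s', rfl, hstep', hn⟩ := trans_res_inv hw
    exact Or.inr ⟨sb, s', hpath, hstep', hn, h1, h2⟩

/-- Labels of steps of `r` that appear with label `a` in `(r∖M)/A_H`. -/
def GoodLab (AH M : Set A) (b a : Option A) : Prop :=
  (a = none ∧ (b = none ∨ ∃ h, b = some h ∧ h ∈ AH ∧ h ∉ M)) ∨
  (b = a ∧ ∀ x, a = some x → x ∉ AH)

theorem mk_step_resM {M : Set A} (hM : M ⊆ AH) {sb s' : Proc A C} {a b}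
    (ht : Trans env sb b s') (hgl : GoodLab AH M b a) :
    Trans env (.hide (.restrict sb M) AH) a (.hide (.restrict s' M) AH) := by
  rcases hgl with ⟨rfl, hb⟩ | ⟨rfl, hout⟩
  · rcases hb with rfl | ⟨h0, rfl, h1, h2⟩
    · exact Trans.hideOut (Trans.res ht (fun x hx => nomatch hx)) (fun x hx => nomatch hx)
    · exact Trans.hideIn (Trans.res ht (fun x hx => by
        injection hx with hx; subst hx; exact h2)) h1
  · cases b with
    | none =>
      exact Trans.hideOut (Trans.res ht (fun x hx => nomatch hx)) (fun x hx => nomatch hx)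
    | some x =>
      have hx : x ∉ AH := hout x rfl
      exact Trans.hideOut (Trans.res ht (fun y hy => by
          injection hy with hy; subst hy; exact fun hc => hx (hM hc)))
        (fun y hy => by injection hy with hy; subst hy; exact hx)

theorem keyHide {M : Set A} (hM : M ⊆ AH) {r X Z : Proc A C} {a}
    (hr : SBrSNNI env AH r)
    (hX : BrBisim (Trans env) X (.hide r AH)) (hstep : Trans env X a Z) :
    (a = none ∧ Inv2 env AH Z r) ∨
    ∃ sb s' b, HP env AH M r sb ∧ Trans env sb b s' ∧ GoodLab AH M b a ∧
      SBrSNNI env AH sb ∧ SBrSNNI env AH s' ∧ Inv2 env AH X sb ∧ Inv2 env AH Z s' := by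
  rcases isBB_Br.2 X _ hX a Z hstep with ⟨rfl, h1⟩ | ⟨wb, w', htau, hw, hXw, hZw⟩
  · exact Or.inl ⟨rfl, Or.inl h1⟩
  obtain ⟨qb, rfl, hp0⟩ := taustar_hide_inv htau
  obtain ⟨c, q', rfl, hcq, hlab⟩ := trans_hide_inv hw
  have hqbS : SBrSNNI env AH qb := sbrsnni_hered hr (reach_of_hp hp0)
  have hq'S : SBrSNNI env AH q' := sbrsnni_hered hqbS (Relation.ReflTransGen.single ⟨c, hcq⟩)
  rcases hp_split (M := M) hp0 with hclean | ⟨t, t', h0, hpre, hh0AH, hh0M, hth, hsuf⟩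
  · -- no violation on the τ-corridor
    rcases hlab with ⟨rfl, h0, rfl, hh0⟩ | ⟨rfl, hout⟩
    · -- a = none, c = some h0 with h0 ∈ AH
      by_cases hmem : h0 ∈ M
      · -- final step violates M
        have hXqb : BrBisim (Trans env) X (.restrict qb AH) :=
          br_trans hXw (br_symm (sbrsnni_self hqbS))
        rcases keyRes hXqb hstep with ⟨_, hZ⟩ | ⟨sb, s', htp, hst', hnAH, hXs, hZs⟩
        · rcases hclean.cases_tail with heq | ⟨q0, hpre0, hstep0⟩
          · exact Or.inl ⟨rfl, Or.inr (heq ▸ hZ)⟩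
          · have hXq0 : BrBisim (Trans env) X (.hide q0 AH) :=
              br_mid hX hXw (hp_lift_hide hpre0)
                (Relation.ReflTransGen.single (hs_step_hide hstep0))
            obtain ⟨b0, ht0, hb0⟩ := hstep0
            exact Or.inr ⟨q0, qb, b0, hpre0, ht0, Or.inl ⟨rfl, hb0⟩,
              sbrsnni_hered hr (reach_of_hp (hp_mono (Set.empty_subset M) hpre0)),
              hqbS, Or.inl hXq0, Or.inr hZ⟩
        · exact Or.inr ⟨sb, s', _, hclean.trans (tp_hp htp), hst', Or.inr ⟨rfl, hnAH⟩,
            sbrsnni_hered hqbS (reach_of_tp htp),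
            sbrsnni_hered hqbS ((reach_of_tp htp).tail ⟨_, hst'⟩),
            Or.inr hXs, Or.inr hZs⟩
      · exact Or.inr ⟨qb, q', some h0, hclean, hcq, Or.inl ⟨rfl, Or.inr ⟨h0, rfl, hh0, hmem⟩⟩,
          hqbS, hq'S, Or.inl hXw, Or.inl hZw⟩
    · -- visible (or low τ) final step
      exact Or.inr ⟨qb, q', a, hclean, hcq, Or.inr ⟨rfl, hout⟩,
        hqbS, hq'S, Or.inl hXw, Or.inl hZw⟩
  · -- violation at t --h0--> t' inside the corridor
    have htS : SBrSNNI env AH t :=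
      sbrsnni_hered hr (reach_of_hp (hp_mono (Set.empty_subset M) hpre))
    have corridor2 : TauStar (Trans env) (.hide t AH) (.hide qb AH) :=
      (hp_lift_hide hsuf).head (Trans.hideIn hth hh0AH)
    have hXt : BrBisim (Trans env) X (.hide t AH) :=
      br_mid hX hXw (hp_lift_hide hpre) corridor2
    have hXtr : BrBisim (Trans env) X (.restrict t AH) :=
      br_trans hXt (br_symm (sbrsnni_self htS))
    rcases keyRes hXtr hstep with ⟨rfl, hZ⟩ | ⟨sb, s', htp, hst', hnAH, hXs, hZs⟩
    · rcases hpre.cases_tail with heq | ⟨q0, hpre0, hstep0⟩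
      · exact Or.inl ⟨rfl, Or.inr (heq ▸ hZ)⟩
      · have hXq0 : BrBisim (Trans env) X (.hide q0 AH) :=
          br_mid hX hXw (hp_lift_hide hpre0)
            ((Relation.ReflTransGen.single (hs_step_hide hstep0)).trans corridor2)
        obtain ⟨b0, ht0, hb0⟩ := hstep0
        exact Or.inr ⟨q0, t, b0, hpre0, ht0, Or.inl ⟨rfl, hb0⟩,
          sbrsnni_hered hr (reach_of_hp (hp_mono (Set.empty_subset M) hpre0)),
          htS, Or.inl hXq0, Or.inr hZ⟩
    · exact Or.inr ⟨sb, s', a, hpre.trans (tp_hp htp), hst', Or.inr ⟨rfl, hnAH⟩,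
        sbrsnni_hered htS (reach_of_tp htp),
        sbrsnni_hered htS ((reach_of_tp htp).tail ⟨a, hst'⟩),
        Or.inr hXs, Or.inr hZs⟩

theorem keyMain {M : Set A} (hM : M ⊆ AH) {r X Z : Proc A C} {a}
    (hr : SBrSNNI env AH r) (hInv : Inv2 env AH X r) (hstep : Trans env X a Z) :
    (a = none ∧ Inv2 env AH Z r) ∨
    ∃ sb s', SBrSNNI env AH sb ∧ SBrSNNI env AH s' ∧
      TauStar (Trans env) (.hide (.restrict r M) AH) (.hide (.restrict sb M) AH) ∧
      Trans env (.hide (.restrict sb M) AH) a (.hide (.restrict s' M) AH) ∧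
      Inv2 env AH X sb ∧ Inv2 env AH Z s' := by
  rcases hInv with hXh | hXr
  · rcases keyHide hM hr hXh hstep with hst | ⟨sb, s', b, hp, hst', hgl, h1, h2, h3, h4⟩
    · exact Or.inl hst
    · exact Or.inr ⟨sb, s', h1, h2, hp_lift_resM hp, mk_step_resM hM hst' hgl, h3, h4⟩
  · rcases keyRes hXr hstep with ⟨rfl, hZ⟩ | ⟨sb, s', htp, hst', hnAH, hXs, hZs⟩
    · exact Or.inl ⟨rfl, Or.inr hZ⟩
    · exact Or.inr ⟨sb, s', sbrsnni_hered hr (reach_of_tp htp),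
        sbrsnni_hered hr ((reach_of_tp htp).tail ⟨a, hst'⟩),
        hp_lift_resM (tp_hp htp), mk_step_resM hM hst' (Or.inr ⟨rfl, hnAH⟩),
        Or.inr hXs, Or.inr hZs⟩

/-- Core lemma: for a hereditarily BrSNNI process, `q∖A_H ≈_b (q∖M)/A_H` for `M ⊆ A_H`. -/
theorem core_restrict_hide {M : Set A} (hM : M ⊆ AH) {q : Proc A C}
    (hq : SBrSNNI env AH q) :
    BrBisim (Trans env) (.restrict q AH) (.hide (.restrict q M) AH) := by
  classical
  refine ⟨fun x y =>
      (∃ r, SBrSNNI env AH r ∧ y = .hide (.restrict r M) AH ∧ Inv2 env AH x r) ∨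
      (∃ r, SBrSNNI env AH r ∧ x = .hide (.restrict r M) AH ∧ Inv2 env AH y r),
    ⟨?_, ?_⟩, Or.inl ⟨q, hq, rfl, Or.inr (br_refl _)⟩⟩
  · rintro x y (⟨r, h1, h2, h3⟩ | ⟨r, h1, h2, h3⟩)
    · exact Or.inr ⟨r, h1, h2, h3⟩
    · exact Or.inl ⟨r, h1, h2, h3⟩
  · rintro s1 s2 (⟨r, hr, rfl, hInv⟩ | ⟨r, hr, rfl, hInv⟩) a s1' hstep
    · -- challenge from the arbitrary side
      rcases keyMain hM hr hInv hstep with ⟨rfl, hI⟩ | ⟨sb, s', h1, h2, h3, h4, h5, h6⟩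
      · exact Or.inl ⟨rfl, Or.inl ⟨r, hr, rfl, hI⟩⟩
      · exact Or.inr ⟨_, _, h3, h4, Or.inl ⟨sb, h1, rfl, h5⟩, Or.inl ⟨s', h2, rfl, h6⟩⟩
    · -- challenge from the (r∖M)/A_H side
      obtain ⟨c0, z1, rfl, hz1, hlab0⟩ := trans_hide_inv hstep
      obtain ⟨r', rfl, hrc, hnM⟩ := trans_res_inv hz1
      have hr' : SBrSNNI env AH r' :=
        sbrsnni_hered hr (Relation.ReflTransGen.single ⟨c0, hrc⟩)
      have hu : BrBisim (Trans env) s2 (.hide r AH) := by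
        rcases hInv with h | h
        · exact h
        · exact br_trans h (sbrsnni_self hr)
      have hstep_h : Trans env (.hide r AH) a (.hide r' AH) := by
        rcases hlab0 with ⟨rfl, h0, rfl, hmem⟩ | ⟨rfl, hout⟩
        · exact Trans.hideIn hrc hmem
        · exact Trans.hideOut hrc hout
      rcases isBB_Br.2 _ s2 (br_symm hu) a _ hstep_h with ⟨rfl, h1⟩ | ⟨ub, u', htau, hstepu, g1, g2⟩
      · exact Or.inl ⟨rfl, Or.inr ⟨r', hr', rfl, Or.inl (br_symm h1)⟩⟩
      · exact Or.inr ⟨ub, u', htau, hstepu,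
          Or.inr ⟨r, hr, rfl, Or.inl (br_symm g1)⟩,
          Or.inr ⟨r', hr', rfl, Or.inl (br_symm g2)⟩⟩

end CoreLemma
section Glue

variable {A C : Type} {env : C → Proc A C} {AH : Set A}

/-- Branching bisimilarity is a congruence w.r.t. restriction. -/
theorem br_congr_res {p q : Proc A C} (N : Set A) (h : BrBisim (Trans env) p q) :
    BrBisim (Trans env) (.restrict p N) (.restrict q N) := by
  refine ⟨fun x y => ∃ p q, x = .restrict p N ∧ y = .restrict q N ∧ BrBisim (Trans env) p q,
    ⟨?_, ?_⟩, ⟨p, q, rfl, rfl, h⟩⟩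
  · rintro x y ⟨p, q, rfl, rfl, h⟩; exact ⟨q, p, rfl, rfl, br_symm h⟩
  · rintro s1 s2 ⟨p, q, rfl, rfl, hpq⟩ a s1' hstep
    obtain ⟨p', rfl, ht, hn⟩ := trans_res_inv hstep
    rcases isBB_Br.2 p q hpq a p' ht with ⟨rfl, h1⟩ | ⟨qb, q', htau, hq, h1, h2⟩
    · exact Or.inl ⟨rfl, ⟨p', q, rfl, rfl, h1⟩⟩
    · exact Or.inr ⟨.restrict qb N, .restrict q' N, tau_lift_res htau, Trans.res hq hn,
        ⟨p, qb, rfl, rfl, h1⟩, ⟨p', q', rfl, rfl, h2⟩⟩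

/-- Double restrictions with the same total blocked set are bisimilar. -/
theorem br_rr {L1 L2 L1' L2' : Set A} (hE : L1 ∪ L2 = L1' ∪ L2') (q : Proc A C) :
    BrBisim (Trans env) (.restrict (.restrict q L1) L2) (.restrict (.restrict q L1') L2') := by
  refine br_of_sim2 (B := fun x y => ∃ p, x = .restrict (.restrict p L1) L2 ∧
    y = .restrict (.restrict p L1') L2') ?_ ?_ ⟨q, rfl, rfl⟩
  · rintro x y ⟨p, rfl, rfl⟩ a x' hstep
    obtain ⟨p', rfl, ht, hn⟩ := trans_rr_inv hstep
    exact ⟨_, trans_rr_mk ht (fun c hc => hE ▸ hn c hc), ⟨p', rfl, rfl⟩⟩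
  · rintro x y ⟨p, rfl, rfl⟩ a y' hstep
    obtain ⟨p', rfl, ht, hn⟩ := trans_rr_inv hstep
    exact ⟨_, trans_rr_mk ht (fun c hc => hE ▸ hn c hc), ⟨p', rfl, rfl⟩⟩

/-- `((q∖N)∖M)/A_H ≈ (q∖L)/A_H` when `N ∪ M = L`. -/
theorem br_hrr_hr {N M L : Set A} (hE : N ∪ M = L) (q : Proc A C) :
    BrBisim (Trans env) (.hide (.restrict (.restrict q N) M) AH) (.hide (.restrict q L) AH) := by
  refine br_of_sim2 (B := fun x y => ∃ p, x = .hide (.restrict (.restrict p N) M) AH ∧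
    y = .hide (.restrict p L) AH) ?_ ?_ ⟨q, rfl, rfl⟩
  · rintro x y ⟨p, rfl, rfl⟩ a x' hstep
    obtain ⟨c, z, rfl, hz, hlab⟩ := trans_hide_inv hstep
    obtain ⟨p', rfl, ht, hn⟩ := trans_rr_inv hz
    have hn' : ∀ x, c = some x → x ∉ L := fun x hx => hE ▸ hn x hx
    rcases hlab with ⟨rfl, h0, rfl, hmem⟩ | ⟨rfl, hout⟩
    · exact ⟨_, Trans.hideIn (Trans.res ht (fun x hx => hn' x hx)) hmem, ⟨p', rfl, rfl⟩⟩
    · exact ⟨_, Trans.hideOut (Trans.res ht (fun x hx => hn' x hx)) hout, ⟨p', rfl, rfl⟩⟩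
  · rintro x y ⟨p, rfl, rfl⟩ a y' hstep
    obtain ⟨c, z, rfl, hz, hlab⟩ := trans_hide_inv hstep
    obtain ⟨p', rfl, ht, hn⟩ := trans_res_inv hz
    have hn' : ∀ x, c = some x → x ∉ N ∪ M := fun x hx => hE ▸ hn x hx
    rcases hlab with ⟨rfl, h0, rfl, hmem⟩ | ⟨rfl, hout⟩
    · exact ⟨_, Trans.hideIn (trans_rr_mk ht hn') hmem, ⟨p', rfl, rfl⟩⟩
    · exact ⟨_, Trans.hideOut (trans_rr_mk ht hn') hout, ⟨p', rfl, rfl⟩⟩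

/-- Restriction by a low set commutes with hiding of `A_H`. -/
theorem br_res_hide_swap {N : Set A} (hN : ∀ x ∈ AH, x ∉ N) (q : Proc A C) :
    BrBisim (Trans env) (.restrict (.hide q AH) N) (.hide (.restrict q N) AH) := by
  refine br_of_sim2 (B := fun x y => ∃ p, x = .restrict (.hide p AH) N ∧
    y = .hide (.restrict p N) AH) ?_ ?_ ⟨q, rfl, rfl⟩
  · rintro x y ⟨p, rfl, rfl⟩ a x' hstep
    obtain ⟨z, rfl, hz, hnN⟩ := trans_res_inv hstep
    obtain ⟨c, p', rfl, ht, hlab⟩ := trans_hide_inv hz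
    rcases hlab with ⟨rfl, h0, rfl, hmem⟩ | ⟨rfl, hout⟩
    · exact ⟨_, Trans.hideIn (Trans.res ht (fun x hx => by
        injection hx with hx; subst hx; exact hN _ hmem)) hmem, ⟨p', rfl, rfl⟩⟩
    · exact ⟨_, Trans.hideOut (Trans.res ht hnN) hout, ⟨p', rfl, rfl⟩⟩
  · rintro x y ⟨p, rfl, rfl⟩ a y' hstep
    obtain ⟨c, z, rfl, hz, hlab⟩ := trans_hide_inv hstep
    obtain ⟨p', rfl, ht, hnN⟩ := trans_res_inv hz
    rcases hlab with ⟨rfl, h0, rfl, hmem⟩ | ⟨rfl, hout⟩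
    · exact ⟨_, Trans.res (Trans.hideIn ht hmem) (fun x hx => nomatch hx), ⟨p', rfl, rfl⟩⟩
    · exact ⟨_, Trans.res (Trans.hideOut ht hout) hnN, ⟨p', rfl, rfl⟩⟩

/-! #### The NDC shape `((q ∥_K r)/K)∖A_H` -/

theorem trans_ndc_inv {K : Set A} {q r z : Proc A C} {a}
    (hr : HighOnly env AH r)
    (h : Trans env (.restrict (.hide (.par K q r) K) AH) a z) :
    ∃ q' r', z = .restrict (.hide (.par K q' r') K) AH ∧
      ((r' = r ∧ Trans env q a q' ∧ ∀ x, a = some x → x ∉ K ∧ x ∉ AH) ∨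
       (a = none ∧ ∃ h0, h0 ∈ K ∧ Trans env q (some h0) q' ∧ Trans env r (some h0) r')) := by
  obtain ⟨p1, rfl, h1, hnAH⟩ := trans_res_inv h
  obtain ⟨c, p2, rfl, h2, hlab⟩ := trans_hide_inv h1
  cases h2 with
  | parL hq hn =>
    rcases hlab with ⟨rfl, h0, rfl, hmem⟩ | ⟨rfl, hout⟩
    · exact absurd hmem (hn _ rfl)
    · exact ⟨_, _, rfl, Or.inl ⟨rfl, hq, fun x hx => ⟨hn x hx, hnAH x hx⟩⟩⟩
  | parR hrr hn =>
    obtain ⟨h0, h0AH, rfl⟩ := highOnly_now hr hrr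
    rcases hlab with ⟨rfl, h1', heq, hmem⟩ | ⟨rfl, hout⟩
    · injection heq with heq; subst heq; exact absurd hmem (hn _ rfl)
    · exact absurd h0AH (hnAH _ rfl)
  | sync hq hrr hx =>
    rcases hlab with ⟨rfl, h0, heq, hmem⟩ | ⟨rfl, hout⟩
    · injection heq with heq; subst heq
      exact ⟨_, _, rfl, Or.inr ⟨rfl, _, hx, hq, hrr⟩⟩
    · exact absurd hx (hout _ rfl)

theorem trans_ndc_mk1 {K : Set A} {q r q' : Proc A C} {a}
    (hq : Trans env q a q') (hc : ∀ x, a = some x → x ∉ K ∧ x ∉ AH) :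
    Trans env (.restrict (.hide (.par K q r) K) AH) a
      (.restrict (.hide (.par K q' r) K) AH) :=
  Trans.res (Trans.hideOut (Trans.parL hq (fun x hx => (hc x hx).1))
    (fun x hx => (hc x hx).1)) (fun x hx => (hc x hx).2)

theorem trans_ndc_mk2 {K : Set A} {q r q' r' : Proc A C} {h0}
    (hmem : h0 ∈ K) (hq : Trans env q (some h0) q') (hrr : Trans env r (some h0) r') :
    Trans env (.restrict (.hide (.par K q r) K) AH) none
      (.restrict (.hide (.par K q' r') K) AH) :=
  Trans.res (Trans.hideIn (Trans.sync hq hrr hmem) hmem) (fun x hx => nomatch hx)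

/-- Move a high restriction from the protected component to the high component. -/
theorem br_ndc_swapM {K M : Set A} (hM : M ⊆ AH) {r : Proc A C}
    (hr : HighOnly env AH r) (q : Proc A C) :
    BrBisim (Trans env) (.restrict (.hide (.par K (.restrict q M) r) K) AH)
      (.restrict (.hide (.par K q (.restrict r M)) K) AH) := by
  refine br_of_sim2 (B := fun x y => ∃ p s, x = .restrict (.hide (.par K (.restrict p M) s) K) AH ∧
    y = .restrict (.hide (.par K p (.restrict s M)) K) AH ∧ HighOnly env AH s)
    ?_ ?_ ⟨q, r, rfl, rfl, hr⟩
  · rintro x y ⟨p, s, rfl, rfl, hs⟩ a x' hstep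
    rcases trans_ndc_inv hs hstep with ⟨q1, r1, rfl, hcase⟩
    rcases hcase with ⟨rfl, hq1, hc⟩ | ⟨rfl, h0, hmem, hq1, hr1⟩
    · obtain ⟨p', rfl, ht, hnM⟩ := trans_res_inv hq1
      exact ⟨_, trans_ndc_mk1 ht hc, ⟨p', r1, rfl, rfl, hs⟩⟩
    · obtain ⟨p', rfl, ht, hnM⟩ := trans_res_inv hq1
      exact ⟨_, trans_ndc_mk2 hmem ht (Trans.res hr1 hnM),
        ⟨p', r1, rfl, rfl, highOnly_trans hs hr1⟩⟩
  · rintro x y ⟨p, s, rfl, rfl, hs⟩ a y' hstep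
    rcases trans_ndc_inv (highOnly_res hs) hstep with ⟨q1, r1, rfl, hcase⟩
    rcases hcase with ⟨rfl, hq1, hc⟩ | ⟨rfl, h0, hmem, hq1, hr1⟩
    · refine ⟨_, trans_ndc_mk1 (Trans.res hq1 (fun x hx => fun hcM => (hc x hx).2 (hM hcM))) hc,
        ⟨q1, s, rfl, rfl, hs⟩⟩
    · obtain ⟨s', rfl, ht, hnM⟩ := trans_res_inv hr1
      exact ⟨_, trans_ndc_mk2 hmem (Trans.res hq1 hnM) ht,
        ⟨q1, s', rfl, rfl, highOnly_trans hs ht⟩⟩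

/-- Restriction by a low set commutes with the NDC context. -/
theorem br_ndc_resN {K N : Set A} (hK : K ⊆ AH) (hN : ∀ x ∈ AH, x ∉ N) {r : Proc A C}
    (hr : HighOnly env AH r) (q : Proc A C) :
    BrBisim (Trans env) (.restrict (.restrict (.hide (.par K q r) K) AH) N)
      (.restrict (.hide (.par K (.restrict q N) r) K) AH) := by
  refine br_of_sim2 (B := fun x y =>
    ∃ p s, x = .restrict (.restrict (.hide (.par K p s) K) AH) N ∧
      y = .restrict (.hide (.par K (.restrict p N) s) K) AH ∧ HighOnly env AH s)
    ?_ ?_ ⟨q, r, rfl, rfl, hr⟩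
  · rintro x y ⟨p, s, rfl, rfl, hs⟩ a x' hstep
    obtain ⟨z, rfl, hz, hnN⟩ := trans_res_inv hstep
    rcases trans_ndc_inv hs hz with ⟨q1, r1, rfl, hcase⟩
    rcases hcase with ⟨rfl, hq1, hc⟩ | ⟨rfl, h0, hmem, hq1, hr1⟩
    · exact ⟨_, trans_ndc_mk1 (Trans.res hq1 hnN) hc, ⟨q1, r1, rfl, rfl, hs⟩⟩
    · exact ⟨_, trans_ndc_mk2 hmem (Trans.res hq1 (fun x hx => by
        injection hx with hx; subst hx; exact hN _ (hK hmem))) hr1,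
        ⟨q1, r1, rfl, rfl, highOnly_trans hs hr1⟩⟩
  · rintro x y ⟨p, s, rfl, rfl, hs⟩ a y' hstep
    rcases trans_ndc_inv hs hstep with ⟨q1, r1, rfl, hcase⟩
    rcases hcase with ⟨rfl, hq1, hc⟩ | ⟨rfl, h0, hmem, hq1, hr1⟩
    · obtain ⟨p', rfl, ht, hnN⟩ := trans_res_inv hq1
      exact ⟨_, Trans.res (trans_ndc_mk1 ht hc) hnN, ⟨p', r1, rfl, rfl, hs⟩⟩
    · obtain ⟨p', rfl, ht, hnN⟩ := trans_res_inv hq1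
      exact ⟨_, Trans.res (trans_ndc_mk2 hmem ht hr1) (fun x hx => nomatch hx),
        ⟨p', r1, rfl, rfl, highOnly_trans hs hr1⟩⟩

/-- Collapse a double restriction inside the NDC context. -/
theorem br_ndc_rr {K N M L : Set A} (hE : N ∪ M = L) {r : Proc A C}
    (hr : HighOnly env AH r) (q : Proc A C) :
    BrBisim (Trans env) (.restrict (.hide (.par K (.restrict (.restrict q N) M) r) K) AH)
      (.restrict (.hide (.par K (.restrict q L) r) K) AH) := by
  refine br_of_sim2 (B := fun x y =>
    ∃ p s, x = .restrict (.hide (.par K (.restrict (.restrict p N) M) s) K) AH ∧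
      y = .restrict (.hide (.par K (.restrict p L) s) K) AH ∧ HighOnly env AH s)
    ?_ ?_ ⟨q, r, rfl, rfl, hr⟩
  · rintro x y ⟨p, s, rfl, rfl, hs⟩ a x' hstep
    rcases trans_ndc_inv hs hstep with ⟨q1, r1, rfl, hcase⟩
    rcases hcase with ⟨rfl, hq1, hc⟩ | ⟨rfl, h0, hmem, hq1, hr1⟩
    · obtain ⟨p', rfl, ht, hn⟩ := trans_rr_inv hq1
      exact ⟨_, trans_ndc_mk1 (Trans.res ht (fun x hx => hE ▸ hn x hx)) hc,
        ⟨p', r1, rfl, rfl, hs⟩⟩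
    · obtain ⟨p', rfl, ht, hn⟩ := trans_rr_inv hq1
      exact ⟨_, trans_ndc_mk2 hmem (Trans.res ht (fun x hx => hE ▸ hn x hx)) hr1,
        ⟨p', r1, rfl, rfl, highOnly_trans hs hr1⟩⟩
  · rintro x y ⟨p, s, rfl, rfl, hs⟩ a y' hstep
    rcases trans_ndc_inv hs hstep with ⟨q1, r1, rfl, hcase⟩
    rcases hcase with ⟨rfl, hq1, hc⟩ | ⟨rfl, h0, hmem, hq1, hr1⟩
    · obtain ⟨p', rfl, ht, hn⟩ := trans_res_inv hq1
      exact ⟨_, trans_ndc_mk1 (trans_rr_mk ht (fun x hx => hE ▸ hn x hx)) hc,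
        ⟨p', r1, rfl, rfl, hs⟩⟩
    · obtain ⟨p', rfl, ht, hn⟩ := trans_res_inv hq1
      exact ⟨_, trans_ndc_mk2 hmem (trans_rr_mk ht (fun x hx => hE ▸ hn x hx)) hr1,
        ⟨p', r1, rfl, rfl, highOnly_trans hs hr1⟩⟩

end Glue
section MainParts

variable {A C : Type} {env : C → Proc A C} {AH : Set A}

theorem sbrsnni_res_low {N : Set A} (hN : ∀ x ∈ AH, x ∉ N) {Q : Proc A C}
    (hS : SBrSNNI env AH Q) : SBrSNNI env AH (.restrict Q N) := by
  intro p' hre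
  obtain ⟨Q', rfl, hr⟩ := reach_res_inv hre
  show BrBisim (Trans env) (.restrict (.restrict Q' N) AH) (.hide (.restrict Q' N) AH)
  exact br_trans (br_rr (Set.union_comm N AH) Q')
    (br_trans (br_congr_res N (hS Q' hr)) (br_res_hide_swap hN Q'))

theorem part_sbrsnni {P : Proc A C} {L : Set A} (h : SBrSNNI env AH P) :
    SBrSNNI env AH (.restrict P L) := by
  intro p' hre
  obtain ⟨Q, rfl, hr⟩ := reach_res_inv hre
  have hQ : SBrSNNI env AH Q := sbrsnni_hered h hr
  have hN : ∀ x ∈ AH, x ∉ L \ AH := fun x hx hc => hc.2 hx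
  have hQN : SBrSNNI env AH (.restrict Q (L \ AH)) := sbrsnni_res_low hN hQ
  have b1 : BrBisim (Trans env) (.restrict (.restrict Q L) AH)
      (.restrict (.restrict Q (L \ AH)) AH) := br_rr (Set.diff_union_self).symm Q
  have b2 := core_restrict_hide (M := L ∩ AH) Set.inter_subset_right hQN
  have b3 := br_hrr_hr (env := env) (AH := AH) (Set.diff_union_inter L AH) Q
  exact br_trans b1 (br_trans b2 b3)

theorem part_pbrndc {P : Proc A C} {L : Set A} (h : PBrNDC env AH P) :
    PBrNDC env AH (.restrict P L) := by
  intro p' hre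
  obtain ⟨Q, rfl, hr⟩ := reach_res_inv hre
  intro Qh hQh K hK
  have hM : L ∩ AH ⊆ AH := Set.inter_subset_right
  have hN : ∀ x ∈ AH, x ∉ L \ AH := fun x hx hc => hc.2 hx
  have d0 := h Q hr (.restrict Qh (L ∩ AH)) (highOnly_res hQh) K hK
  have hE1 : L ∪ AH = AH ∪ (L \ AH) := by
    rw [Set.union_comm AH, Set.diff_union_self]
  have d1 : BrBisim (Trans env) (.restrict (.restrict Q L) AH)
      (.restrict (.restrict Q AH) (L \ AH)) := br_rr hE1 Q
  have d2 := br_congr_res (L \ AH) d0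
  have d3 := br_ndc_resN hK hN (highOnly_res (M := L ∩ AH) hQh) Q
  have d4 := br_ndc_swapM (K := K) hM hQh (.restrict Q (L \ AH))
  have d5 := br_ndc_rr (K := K) (Set.diff_union_inter L AH) hQh Q
  exact br_trans d1 (br_trans d2 (br_trans d3 (br_trans (br_symm d4) d5)))

theorem part_sbrndc {P : Proc A C} {L : Set A} (h : SBrNDC env AH P) :
    SBrNDC env AH (.restrict P L) := by
  intro p' p'' hre h0 hh0 htr
  obtain ⟨Q', rfl, hr⟩ := reach_res_inv hre
  obtain ⟨Q'', rfl, ht, hn⟩ := trans_res_inv htr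
  have hb := h Q' Q'' hr h0 hh0 ht
  exact br_trans (br_rr (Set.union_comm L AH) Q')
    (br_trans (br_congr_res L hb) (br_rr (Set.union_comm AH L) Q''))

end MainParts
/-- SBrSNNI, P_BrNDC and SBrNDC are compositional w.r.t.
restriction, for every `L ⊆ A`. -/
theorem restrict_compositionality {A C : Type} (env : C → Proc A C)
    (hguard : ∀ c, Guarded (env c)) (AH : Set A) (P : Proc A C) (L : Set A) :
    (SBrSNNI env AH P → SBrSNNI env AH (Proc.restrict P L)) ∧
    (PBrNDC env AH P → PBrNDC env AH (Proc.restrict P L)) ∧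
    (SBrNDC env AH P → SBrNDC env AH (Proc.restrict P L)) :=
  ⟨part_sbrsnni, part_pbrndc, part_sbrndc⟩

end SecurityNI
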